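/- The polynomial T = x' * y' * z' lies in the range of MvPolynomial.map (algebraMap K L); that is, there exists T₀ ∈ MvPolynomial (Fin 3) K with MvPolynomial.map (algebraMap K L) T₀ = T. -/

import Mathlib

/-!
The Frobenius `a ↦ a ^ q` of `L/K` permutes the three linear forms cyclically
(`x' ↦ y' ↦ z' ↦ x'`, using `α ^ q ^ 3 = α` since `#L = q ^ 3`), so it fixes their product `T`
coefficientwise. The elements of `L` fixed by the Frobenius are exactly those of `K`, because the
Frobenius generates `Gal(L/K)` and `L/K` is Galois.
-/

open MvPolynomial

/-- The linear form x' = α•x + α^q•y + α^(q²)•z. -/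
noncomputable def xLin (L : Type*) [CommRing L] (q : ℕ) (α : L) : MvPolynomial (Fin 3) L :=
  α • X 0 + α ^ q • X 1 + α ^ q ^ 2 • X 2

/-- The linear form y' = α^q•x + α^(q²)•y + α•z. -/
noncomputable def yLin (L : Type*) [CommRing L] (q : ℕ) (α : L) : MvPolynomial (Fin 3) L :=
  α ^ q • X 0 + α ^ q ^ 2 • X 1 + α • X 2

/-- The linear form z' = α^(q²)•x + α•y + α^q•z. -/
noncomputable def zLin (L : Type*) [CommRing L] (q : ℕ) (α : L) : MvPolynomial (Fin 3) L :=
  α ^ q ^ 2 • X 0 + α • X 1 + α ^ q • X 2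

/-- F = x'² * y'. -/
noncomputable def Fcub (L : Type*) [CommRing L] (q : ℕ) (α : L) : MvPolynomial (Fin 3) L :=
  xLin L q α ^ 2 * yLin L q α

/-- G = y'² * z'. -/
noncomputable def Gcub (L : Type*) [CommRing L] (q : ℕ) (α : L) : MvPolynomial (Fin 3) L :=
  yLin L q α ^ 2 * zLin L q α

/-- H = z'² * x'. -/
noncomputable def Hcub (L : Type*) [CommRing L] (q : ℕ) (α : L) : MvPolynomial (Fin 3) L :=
  zLin L q α ^ 2 * xLin L q α

/-- T = x' * y' * z'. -/
noncomputable def Tcub (L : Type*) [CommRing L] (q : ℕ) (α : L) : MvPolynomial (Fin 3) L :=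
  xLin L q α * yLin L q α * zLin L q α

namespace FiniteField

variable {K L : Type*} [Field K] [Fintype K] [Field L] [Finite L] [Algebra K L]

theorem mem_range_algebraMap_iff_pow_card_eq_self (a : L) :
    a ∈ Set.range (algebraMap K L) ↔ a ^ Fintype.card K = a := by
  refine ⟨?_, fun ha ↦ (IsGalois.mem_range_algebraMap_iff_fixed a).2 fun f ↦ ?_⟩
  · rintro ⟨k, rfl⟩
    rw [← map_pow, pow_card]
  · obtain ⟨n, rfl⟩ := (bijective_frobeniusAlgEquivOfAlgebraic_pow K L).2 f
    rw [AlgEquiv.coe_pow, coe_frobeniusAlgEquivOfAlgebraic]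
    exact Function.iterate_fixed ha n

theorem mem_range_map_algebraMap_of_map_frobenius_eq {σ : Type*} {P : MvPolynomial σ L}
    (hP : map (frobeniusAlgHom K L : L →+* L) P = P) :
    P ∈ Set.range (map (algebraMap K L)) := by
  rw [mem_range_map_iff_coeffs_subset]
  intro a ha
  obtain ⟨d, -, rfl⟩ := mem_coeffs_iff.1 ha
  rw [mem_range_algebraMap_iff_pow_card_eq_self]
  simpa [coeff_map] using congr_arg (coeff d) hP

end FiniteField

section CyclicLinearForms

variable {L : Type*} [CommRing L] {q : ℕ} {α : L} {φ : L →+* L}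

theorem map_xLin (hφ : ∀ a, φ a = a ^ q) (hα : α ^ q ^ 3 = α) :
    map φ (xLin L q α) = yLin L q α := by
  simp only [xLin, yLin, smul_eq_C_mul, map_add, map_mul, map_C, map_X, hφ, ← pow_mul, ← sq,
    ← pow_succ, hα]

theorem map_yLin (hφ : ∀ a, φ a = a ^ q) (hα : α ^ q ^ 3 = α) :
    map φ (yLin L q α) = zLin L q α := by
  simp only [yLin, zLin, smul_eq_C_mul, map_add, map_mul, map_C, map_X, hφ, ← pow_mul, ← sq,
    ← pow_succ, hα]

theorem map_zLin (hφ : ∀ a, φ a = a ^ q) (hα : α ^ q ^ 3 = α) :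
    map φ (zLin L q α) = xLin L q α := by
  simp only [zLin, xLin, smul_eq_C_mul, map_add, map_mul, map_C, map_X, hφ, ← pow_mul, ← sq,
    ← pow_succ, hα]

theorem map_Tcub (hφ : ∀ a, φ a = a ^ q) (hα : α ^ q ^ 3 = α) :
    map φ (Tcub L q α) = Tcub L q α := by
  rw [Tcub, map_mul, map_mul, map_xLin hφ hα, map_yLin hφ hα, map_zLin hφ hα]
  ring

end CyclicLinearForms

theorem stmt_5 (K L : Type*) [Field K] [Fintype K] [Field L] [Fintype L] [Algebra K L]
    (hrank : Module.finrank K L = 3) (α : L) :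
    ∃ T₀ : MvPolynomial (Fin 3) K,
      MvPolynomial.map (algebraMap K L) T₀ = Tcub L (Fintype.card K) α := by
  have hα : α ^ Fintype.card K ^ 3 = α := by
    rw [← hrank, ← Module.card_eq_pow_finrank, FiniteField.pow_card]
  exact FiniteField.mem_range_map_algebraMap_of_map_frobenius_eq
    (map_Tcub (fun _ ↦ rfl) hα)
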